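/- arXiv:0803.1546 — 6 statements merged into one kernel-verified Lean document; each statement's English description precedes it below -/
import Mathlib

section
/- The 2x2 determinant of binomial coefficients det [[C(k+ℓ,k), C(k+ℓ,k-1)], [C(k+ℓ,k+1), C(k+ℓ,k)]] equals the Narayana number (1/(k+ℓ+1)) · C(k+ℓ+1,k) · C(k+ℓ+1,k+1), for all natural numbers k, ℓ. -/
/-!
Write `a, b, c` for the consecutive binomials `C(n,k-1), C(n,k), C(n,k+1)`. Pascal's rule turns
the right-hand side into `(a + b)(b + c) / (n + 1)`, and the ratio of consecutive binomials
expresses `a` and `c` as rational multiples of `b`, so both sides become `b²` times the same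
rational function of `k` and `ℓ`.
-/

/-- Binomial coefficient with integer lower index, `0` when the index is negative. -/
def bin (n : ℕ) (m : ℤ) : ℚ := if 0 ≤ m then (n.choose m.toNat : ℚ) else 0

lemma bin_natCast (n m : ℕ) : bin n m = n.choose m := by simp [bin]

lemma succ_mul_choose_sq_sub_choose_mul_choose (n k : ℕ) :
    ((n : ℚ) + 1) * ((n.choose (k + 1) : ℚ) ^ 2 - n.choose k * n.choose (k + 2))
      = (n + 1).choose (k + 1) * (n + 1).choose (k + 2) := by
  rcases lt_or_ge n (k + 1) with hn | hn
  · simp [Nat.choose_eq_zero_of_lt hn, Nat.choose_eq_zero_of_lt (by omega : n < k + 2),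
      Nat.choose_eq_zero_of_lt (by omega : n + 1 < k + 2)]
  obtain ⟨ℓ, rfl⟩ := Nat.exists_eq_add_of_le hn
  have hk : (k : ℚ) + 2 ≠ 0 := by positivity
  have hℓ : (ℓ : ℚ) + 1 ≠ 0 := by positivity
  have ratio₁ : ((k + 1 + ℓ).choose (k + 1) : ℚ) * (k + 1) = (k + 1 + ℓ).choose k * (ℓ + 1) := by
    have := Nat.choose_succ_right_eq (k + 1 + ℓ) k
    rw [show k + 1 + ℓ - k = ℓ + 1 by omega] at this
    exact_mod_cast this
  have ratio₂ : ((k + 1 + ℓ).choose (k + 2) : ℚ) * (k + 2) = (k + 1 + ℓ).choose (k + 1) * ℓ := by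
    have := Nat.choose_succ_right_eq (k + 1 + ℓ) (k + 1)
    rw [show k + 1 + ℓ - (k + 1) = ℓ by omega] at this
    exact_mod_cast this
  have pascal₁ : ((k + 1 + ℓ + 1).choose (k + 1) : ℚ)
      = (k + 1 + ℓ).choose k + (k + 1 + ℓ).choose (k + 1) := by
    exact_mod_cast Nat.choose_succ_succ' _ _
  have pascal₂ : ((k + 1 + ℓ + 1).choose (k + 2) : ℚ)
      = (k + 1 + ℓ).choose (k + 1) + (k + 1 + ℓ).choose (k + 2) := by
    exact_mod_cast Nat.choose_succ_succ' _ _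
  rw [pascal₁, pascal₂, eq_div_of_mul_eq hℓ ratio₁.symm, eq_div_of_mul_eq hk ratio₂]
  push_cast
  field_simp
  ring

theorem narayana_det (k ℓ : ℕ) :
    bin (k + ℓ) k * bin (k + ℓ) k - bin (k + ℓ) ((k : ℤ) - 1) * bin (k + ℓ) ((k : ℤ) + 1)
      = (1 / ((k : ℚ) + ℓ + 1)) * bin (k + ℓ + 1) k * bin (k + ℓ + 1) ((k : ℤ) + 1) := by
  rcases k with _ | k
  · simp [bin, field]
  · have key := succ_mul_choose_sq_sub_choose_mul_choose (k + 1 + ℓ) k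
    rw [show ((k + 1 : ℕ) : ℤ) - 1 = (k : ℕ) by push_cast; ring,
      show ((k + 1 : ℕ) : ℤ) + 1 = (k + 2 : ℕ) by push_cast; ring]
    simp only [bin_natCast]
    push_cast at key ⊢
    field_simp
    linear_combination key
end

section
/- The 3x3 determinant of binomial coefficients with (i,j) entry C(k+ℓ, k+i-j) (for i,j ∈ {0,1,2}, so the matrix is [[C(k+ℓ,k), C(k+ℓ,k-1), C(k+ℓ,k-2)], [C(k+ℓ,k+1), C(k+ℓ,k), C(k+ℓ,k-1)], [C(k+ℓ,k+2), C(k+ℓ,k+1), C(k+ℓ,k)]]) equals Θ_{k,ℓ} = 2·(k+ℓ)!·(k+ℓ+1)!·(k+ℓ+2)! / (k!·(k+1)!·(k+2)!·ℓ!·(ℓ+1)!·(ℓ+2)!), for all natural numbers k, ℓ. -/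
/-- `Θ_{k,ℓ} = 2·(k+ℓ)!·(k+ℓ+1)!·(k+ℓ+2)! / (k!·(k+1)!·(k+2)!·ℓ!·(ℓ+1)!·(ℓ+2)!)`. -/
def theta (k ℓ : ℕ) : ℚ :=
  2 * (k + ℓ).factorial * (k + ℓ + 1).factorial * (k + ℓ + 2).factorial /
    (k.factorial * (k + 1).factorial * (k + 2).factorial *
      ℓ.factorial * (ℓ + 1).factorial * (ℓ + 2).factorial)

/-! Every entry `C(k+ℓ, k+i-j)` equals `(k+ℓ)! / ((k+2)! (ℓ+2)!)` times the falling factorials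
`(k+2)^{(2+j-i)}` and `(ℓ+2)^{(2+i-j)}`, and these vanish exactly when the lower index leaves
`[0, k+ℓ]`. So the determinant is the cube of that scale times a determinant of polynomials in
`k` and `ℓ`, and both sides reduce to one polynomial identity with no case distinction. -/

open Nat Polynomial

theorem bin_sub_mul_factorial_mul_factorial {N A B p q : ℕ} (h : N + p + q = A + B) :
    bin N ((A : ℤ) - p) * A.factorial * B.factorial =
      N.factorial * A.descFactorial p * B.descFactorial q := by
  by_cases hp : A < p
  · rw [bin, if_neg (by omega), descFactorial_eq_zero_iff_lt.2 hp]
    simp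
  by_cases hq : B < q
  · rw [bin, if_pos (by omega), choose_eq_zero_of_lt (by omega), descFactorial_eq_zero_iff_lt.2 hq]
    simp
  rw [bin, if_pos (by omega), show ((A : ℤ) - p).toNat = A - p by omega]
  norm_cast
  rw [← factorial_mul_descFactorial (not_lt.1 hp), ← factorial_mul_descFactorial (not_lt.1 hq),
    ← choose_mul_factorial_mul_factorial (show A - p ≤ N by omega),
    show N - (A - p) = B - q by omega]
  ring

/- `descPochhammer` rather than `descFactorial`: evaluated in `ℚ` its factors `k + r - m` are not
truncated, so the entries become genuine polynomials in `k` and `ℓ`. -/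
theorem bin_add_sub_eq_mul_descPochhammer (k ℓ r i j : ℕ) (hi : i ≤ r) (hj : j ≤ r) :
    bin (k + ℓ) ((k : ℤ) + i - j) =
      (k + ℓ).factorial / ((k + r).factorial * (ℓ + r).factorial) *
        (descPochhammer ℚ (r + j - i)).eval (k + r : ℚ) *
        (descPochhammer ℚ (r + i - j)).eval (ℓ + r : ℚ) := by
  have h := bin_sub_mul_factorial_mul_factorial (N := k + ℓ) (A := k + r) (B := ℓ + r)
    (p := r + j - i) (q := r + i - j) (by omega)
  rw [show ((k + r : ℕ) : ℤ) - (r + j - i : ℕ) = k + i - j by omega,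
    ← descPochhammer_eval_eq_descFactorial ℚ, ← descPochhammer_eval_eq_descFactorial ℚ] at h
  push_cast at h
  field_simp
  exact h

theorem theta_eq_cube_mul (k ℓ : ℕ) : theta k ℓ =
    ((k + ℓ).factorial / ((k + 2).factorial * (ℓ + 2).factorial)) ^ 3 *
      (2 * (k + ℓ + 1) ^ 2 * (k + ℓ + 2) * (k + 1) * (k + 2) ^ 2 * (ℓ + 1) * (ℓ + 2) ^ 2) := by
  simp only [theta, factorial_succ]
  push_cast
  field_simp
  ring

theorem theta_det (k ℓ : ℕ) :
    (Matrix.of fun i j : Fin 3 => bin (k + ℓ) ((k : ℤ) + (i : ℕ) - (j : ℕ))).det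
      = theta k ℓ := by
  have entry (i j : Fin 3) :=
    bin_add_sub_eq_mul_descPochhammer k ℓ 2 i j (by omega) (by omega)
  rw [Matrix.det_fin_three, theta_eq_cube_mul]
  simp only [Matrix.of_apply, entry]
  norm_num [descPochhammer_succ_eval]
  ring
end

section
/- For every natural number n, C_{n+2}·C_n − C_{n+1}² = 6·(2n)!·(2n+2)! / (n!·(n+1)!·(n+2)!·(n+3)!), where C_m denotes the m-th Catalan number. -/
/-!
By the ratio `C (m + 1) / C m = 2 (2m + 1) / (m + 2)`, the difference
`C (n + 2) C n - C (n + 1) ^ 2` equals `C n C (n + 1)` times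
`2 (2n + 3) / (n + 3) - 2 (2n + 1) / (n + 2) = 6 / ((n + 2) (n + 3))`;
the closed form `C m = (2m)! / (m! (m + 1)!)` then gives the factorial expression.
-/

open Nat

theorem succ_succ_mul_catalan_succ (m : ℕ) :
    (m + 2) * catalan (m + 1) = 2 * (2 * m + 1) * catalan m := by
  have h := succ_mul_centralBinom_succ m
  rw [← succ_mul_catalan_eq_centralBinom, ← succ_mul_catalan_eq_centralBinom] at h
  apply Nat.eq_of_mul_eq_mul_left (Nat.succ_pos m)
  linarith

theorem cast_catalan_eq_factorial_div {K : Type*} [Field K] [CharZero K] (m : ℕ) :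
    (catalan m : K) = (2 * m)! / (m ! * (m + 1)!) := by
  have h : ((m + 1 : ℕ) : K) * catalan m = (2 * m).choose m := by
    rw [← centralBinom_eq_two_mul_choose, ← succ_mul_catalan_eq_centralBinom]; push_cast; ring
  rw [cast_choose K (by omega), show 2 * m - m = m by omega] at h
  rw [factorial_succ]
  push_cast at h ⊢
  field_simp
  linear_combination h

theorem catalan_add_two_mul_sub_sq {R : Type*} [CommRing R] (n : ℕ) :
    ((n + 2) * (n + 3) : R) * (catalan (n + 2) * catalan n - catalan (n + 1) ^ 2)
      = 6 * catalan n * catalan (n + 1) := by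
  have h₁ : ((n + 2 : ℕ) * catalan (n + 1) : R) = 2 * (2 * n + 1) * catalan n := by
    exact_mod_cast congrArg (Nat.cast (R := R)) (succ_succ_mul_catalan_succ n)
  have h₂ : ((n + 3 : ℕ) * catalan (n + 2) : R) = 2 * (2 * n + 3) * catalan (n + 1) := by
    exact_mod_cast congrArg (Nat.cast (R := R)) (succ_succ_mul_catalan_succ (n + 1))
  push_cast at h₁ h₂
  linear_combination (n + 2 : R) * catalan n * h₂ - (n + 3 : R) * catalan (n + 1) * h₁

theorem catalan_det_formula (n : ℕ) :
    (catalan (n + 2) : ℚ) * (catalan n : ℚ) - (catalan (n + 1) : ℚ) ^ 2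
      = 6 * ((2 * n).factorial : ℚ) * ((2 * n + 2).factorial : ℚ) /
          ((n.factorial : ℚ) * ((n + 1).factorial : ℚ) * ((n + 2).factorial : ℚ) *
            ((n + 3).factorial : ℚ)) := by
  have hdet : (catalan (n + 2) * catalan n - catalan (n + 1) ^ 2 : ℚ)
      = 6 * catalan n * catalan (n + 1) / ((n + 2) * (n + 3)) := by
    rw [eq_div_iff (by positivity), mul_comm]
    exact catalan_add_two_mul_sub_sq n
  rw [hdet, cast_catalan_eq_factorial_div n, cast_catalan_eq_factorial_div (n + 1),
    show 2 * (n + 1) = 2 * n + 2 by ring, factorial_succ (n + 2), factorial_succ (n + 1)]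
  push_cast
  field_simp
  ring
end

section
/- For every natural number n, the 2x2 determinant det [[C(2n,n)−C(2n,n−1), C(2n,n+1)−C(2n,n−2)], [C(2n,n−1)−C(2n,n−2), C(2n,n)−C(2n,n−3)]] equals 6·(2n)!·(2n+2)! / (n!·(n+1)!·(n+2)!·(n+3)!). -/
open Finset Nat

theorem Nat.choose_sub_mul_ascFactorial {a b j : ℕ} (h : j ≤ a) :
    (a + b).choose (a - j) * (b + 1).ascFactorial j = (a + b).choose a * a.descFactorial j := by
  refine Nat.eq_of_mul_eq_mul_right (by positivity : 0 < (a - j)! * b !) ?_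
  calc (a + b).choose (a - j) * (b + 1).ascFactorial j * ((a - j)! * b !)
      = (a + b).choose (a - j) * (a - j)! * (a + b - (a - j))! := by
        rw [show a + b - (a - j) = b + j by omega, ← Nat.factorial_mul_ascFactorial]; ring
    _ = (a + b).choose a * a ! * (a + b - a)! := by
        rw [Nat.choose_mul_factorial_mul_factorial (by omega),
          Nat.choose_mul_factorial_mul_factorial (by omega)]
    _ = (a + b).choose a * a.descFactorial j * ((a - j)! * b !) := by
        rw [Nat.add_sub_cancel_left, ← Nat.factorial_mul_descFactorial h]; ring

theorem bin_of_neg (N : ℕ) {m : ℤ} (hm : m < 0) : bin N m = 0 := if_neg hm.not_ge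

theorem bin_natCast_s5 (N k : ℕ) : bin N k = N.choose k := by simp [bin]

theorem bin_of_lt {N : ℕ} {m : ℤ} (hm : N < m) : bin N m = 0 := by
  lift m to ℕ using by omega
  rw [bin_natCast_s5, Nat.choose_eq_zero_of_lt (by omega), Nat.cast_zero]

theorem bin_symm (N : ℕ) (m : ℤ) : bin N (N - m) = bin N m := by
  rcases lt_or_ge m 0 with hm | hm
  · rw [bin_of_neg N hm, bin_of_lt (by omega)]
  rcases lt_or_ge (N : ℤ) m with hN | hN
  · rw [bin_of_lt hN, bin_of_neg N (by omega)]
  lift m to ℕ using hm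
  rw [← Nat.cast_sub (by omega), bin_natCast_s5, bin_natCast_s5, Nat.choose_symm (by omega)]

theorem bin_add_sub_mul_prod (a b j : ℕ) :
    bin (a + b) ((a : ℤ) - j) * ∏ i ∈ range j, ((b : ℚ) + 1 + i) =
      bin (a + b) a * ∏ i ∈ range j, ((a : ℚ) - i) := by
  rcases le_or_gt j a with h | h
  · have := congrArg (Nat.cast (R := ℚ)) (Nat.choose_sub_mul_ascFactorial (b := b) h)
    push_cast [Nat.ascFactorial_eq_prod_range, Nat.descFactorial_eq_prod_range] at this
    rw [prod_congr rfl fun i hi => Nat.cast_sub (by have := mem_range.1 hi; omega)] at this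
    rw [← Nat.cast_sub h, bin_natCast_s5, bin_natCast_s5]
    simpa [add_assoc, add_comm (1 : ℚ)] using this
  · have : ∏ i ∈ range j, ((a : ℚ) - i) = 0 := prod_eq_zero (mem_range.2 h) (sub_self _)
    rw [this, bin_of_neg _ (by omega), zero_mul, mul_zero]

theorem factorial_ratio_eq_choose_sq (n : ℕ) :
    6 * ((2 * n)! : ℚ) * ((2 * n + 2)! : ℚ) /
        ((n ! : ℚ) * ((n + 1)! : ℚ) * ((n + 2)! : ℚ) * ((n + 3)! : ℚ)) =
      6 * (2 * n + 1) * (2 * n + 2) * ((2 * n).choose n : ℚ) ^ 2 /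
        ((n + 1) ^ 3 * (n + 2) ^ 2 * (n + 3)) := by
  have hc : ((2 * n)! : ℚ) = (2 * n).choose n * n ! * n ! := by
    rw [two_mul]; exact_mod_cast (Nat.add_choose_mul_factorial_mul_factorial n n).symm
  simp only [Nat.factorial_succ, hc, show 2 * n + 2 = 2 * n + 1 + 1 from rfl, Nat.cast_mul,
    Nat.cast_succ]
  field_simp
  ring

theorem schnyder_det (n : ℕ) :
    (bin (2 * n) n - bin (2 * n) ((n : ℤ) - 1)) * (bin (2 * n) n - bin (2 * n) ((n : ℤ) - 3)) -
        (bin (2 * n) ((n : ℤ) + 1) - bin (2 * n) ((n : ℤ) - 2)) *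
          (bin (2 * n) ((n : ℤ) - 1) - bin (2 * n) ((n : ℤ) - 2))
      = 6 * ((2 * n).factorial : ℚ) * ((2 * n + 2).factorial : ℚ) /
          ((n.factorial : ℚ) * ((n + 1).factorial : ℚ) * ((n + 2).factorial : ℚ) *
            ((n + 3).factorial : ℚ)) := by
  have hsymm : bin (2 * n) ((n : ℤ) + 1) = bin (2 * n) ((n : ℤ) - 1) := by
    rw [← bin_symm]; congr 1; push_cast; ring
  have hprod (j : ℕ) := bin_add_sub_mul_prod n n j
  rw [← two_mul, bin_natCast_s5] at hprod
  have h1 := hprod 1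
  have h2 := hprod 2
  have h3 := hprod 3
  simp only [prod_range_succ, prod_range_zero, Nat.cast_ofNat, Nat.cast_one, Nat.cast_zero]
    at h1 h2 h3
  rw [hsymm, factorial_ratio_eq_choose_sq, bin_natCast_s5,
    eq_div_of_mul_eq (by positivity) h1, eq_div_of_mul_eq (by positivity) h2,
    eq_div_of_mul_eq (by positivity) h3]
  field_simp
  ring
end

section
/- For natural numbers k, ℓ, the number of pairs (σ, τ) of 0,1 strings of length k+ℓ, each with exactly k ones, such that τ dominates σ, equals the Narayana number N(k+ℓ+1, k+1) = (1/(k+ℓ+1))·C(k+ℓ+1,k)·C(k+ℓ+1,k+1). -/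
/-- Number of ones among the first `j` entries of a 0,1 string of length `n`. -/
def ones (n : ℕ) (σ : Fin n → Bool) (j : ℕ) : ℕ :=
  (Finset.univ.filter fun i : Fin n => (i : ℕ) < j ∧ σ i = true).card

/-- `τ` dominates `σ`: every prefix of `τ` has at least as many ones as that of `σ`. -/
def Dominates (n : ℕ) (τ σ : Fin n → Bool) : Prop :=
  ∀ j ≤ n, ones n σ j ≤ ones n τ j

/-!
Reflection principle. If `τ` does not dominate `σ`, let `j` be the shortest prefix on which `σ`
has more ones than `τ`; since prefix counts grow by at most one per step, it has exactly one more.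
Exchanging the tails of `σ` and `τ` after position `j` keeps `j` the first such prefix, so it is an
involution, and it turns the pairs of weights `(k, k)` in which `τ` fails to dominate `σ` into all
pairs of weights `(k + 1, k - 1)`. Hence the dominated pairs number
`C(n, k)² - C(n, k + 1) C(n, k - 1)`, and a binomial identity identifies this with the Narayana
number.
-/

open Finset

section Prefix

variable {n : ℕ} {σ : Fin n → Bool} {i j : ℕ}

@[simp]
lemma ones_zero : ones n σ 0 = 0 := by
  simp [ones]

lemma ones_self : ones n σ n = #{x : Fin n | σ x = true} := by
  simp [ones]

lemma ones_eq_add_card_filter (hij : i ≤ j) :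
    ones n σ j = ones n σ i + #{x : Fin n | i ≤ (x : ℕ) ∧ (x : ℕ) < j ∧ σ x = true} := by
  rw [ones, ← card_filter_add_card_filter_not (p := fun x : Fin n => (x : ℕ) < i), filter_filter,
    filter_filter, ones]
  congr 2 <;> ext x <;> simp only [mem_filter, mem_univ, true_and] <;> grind

lemma ones_mono (hij : i ≤ j) : ones n σ i ≤ ones n σ j :=
  (ones_eq_add_card_filter hij).symm ▸ Nat.le_add_right _ _

lemma ones_succ_le : ones n σ (j + 1) ≤ ones n σ j + 1 := by
  rw [ones_eq_add_card_filter (Nat.le_succ j)]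
  refine Nat.add_le_add_left (card_le_one.2 fun x hx y hy => ?_) _
  simp only [mem_filter, mem_univ, true_and] at hx hy
  exact Fin.ext (by omega)

end Prefix

section Reflection

variable {n : ℕ} {σ τ : Fin n → Bool} {i j : ℕ}

def splice (j : ℕ) (σ τ : Fin n → Bool) : Fin n → Bool :=
  fun x => if (x : ℕ) < j then σ x else τ x

lemma ones_splice_of_le (hij : i ≤ j) :
    ones n (splice j σ τ) i = ones n σ i := by
  unfold ones
  congr 1
  refine filter_congr fun x _ => ?_
  simp only [splice]
  grind

lemma ones_splice_add (hji : j ≤ i) :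
    ones n (splice j σ τ) i + ones n τ j = ones n τ i + ones n σ j := by
  rw [ones_eq_add_card_filter hji, ones_eq_add_card_filter (σ := τ) hji, ones_splice_of_le le_rfl]
  have : #{x : Fin n | j ≤ (x : ℕ) ∧ (x : ℕ) < i ∧ splice j σ τ x = true}
      = #{x : Fin n | j ≤ (x : ℕ) ∧ (x : ℕ) < i ∧ τ x = true} := by
    congr 1
    refine filter_congr fun x _ => ?_
    simp only [splice]
    grind
  omega

def swapTails (j : ℕ) (p : (Fin n → Bool) × (Fin n → Bool)) : (Fin n → Bool) × (Fin n → Bool) :=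
  (splice j p.1 p.2, splice j p.2 p.1)

lemma swapTails_swapTails (j : ℕ) (p : (Fin n → Bool) × (Fin n → Bool)) :
    swapTails j (swapTails j p) = p := by
  ext x <;> simp only [swapTails, splice] <;> split_ifs <;> rfl

def ExceedsAt (p : (Fin n → Bool) × (Fin n → Bool)) (j : ℕ) : Prop :=
  j ≤ n ∧ ones n p.2 j < ones n p.1 j

instance (p : (Fin n → Bool) × (Fin n → Bool)) : DecidablePred (ExceedsAt p) :=
  fun _ => inferInstanceAs (Decidable (_ ∧ _))

variable {p : (Fin n → Bool) × (Fin n → Bool)}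

lemma not_dominates_iff_exists_exceedsAt : ¬ Dominates n p.2 p.1 ↔ ∃ j, ExceedsAt p j := by
  simp [Dominates, ExceedsAt]

lemma exceedsAt_swapTails_iff (hij : i ≤ j) :
    ExceedsAt (swapTails j p) i ↔ ExceedsAt p i := by
  simp only [ExceedsAt, swapTails, ones_splice_of_le hij]

lemma exists_exceedsAt_swapTails_find (h : ∃ j, ExceedsAt p j) :
    ∃ j, ExceedsAt (swapTails (Nat.find h) p) j :=
  ⟨_, (exceedsAt_swapTails_iff le_rfl).2 (Nat.find_spec h)⟩

lemma find_exceedsAt_swapTails (h : ∃ j, ExceedsAt p j)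
    (h' : ∃ j, ExceedsAt (swapTails (Nat.find h) p) j) : Nat.find h' = Nat.find h := by
  rw [Nat.find_eq_iff]
  refine ⟨(exceedsAt_swapTails_iff le_rfl).2 (Nat.find_spec h), fun i hi => ?_⟩
  rw [exceedsAt_swapTails_iff hi.le]
  exact Nat.find_min h hi

lemma swapTails_find_swapTails_find (h : ∃ j, ExceedsAt p j)
    (h' : ∃ j, ExceedsAt (swapTails (Nat.find h) p) j) :
    swapTails (Nat.find h') (swapTails (Nat.find h) p) = p := by
  rw [find_exceedsAt_swapTails h h', swapTails_swapTails]

/-- Prefix counts move by at most one per step, so at the first excess it is exactly one. -/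
lemma ones_fst_find (h : ∃ j, ExceedsAt p j) :
    ones n p.1 (Nat.find h) = ones n p.2 (Nat.find h) + 1 := by
  obtain ⟨hjn, hlt⟩ := Nat.find_spec h
  obtain ⟨m, hm⟩ : ∃ m, Nat.find h = m + 1 :=
    Nat.exists_eq_add_one.2 (Nat.pos_of_ne_zero fun h0 => by simp [h0] at hlt)
  have hnot : ¬ ExceedsAt p m := Nat.find_min h (by omega)
  simp only [ExceedsAt, show m ≤ n by omega, true_and, not_lt] at hnot
  rw [hm] at hlt ⊢
  have := ones_succ_le (σ := p.1) (j := m)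
  have := ones_mono (σ := p.2) (Nat.le_add_right m 1)
  omega

lemma ones_swapTails_find (h : ∃ j, ExceedsAt p j) :
    ones n (swapTails (Nat.find h) p).1 n = ones n p.2 n + 1 ∧
      ones n (swapTails (Nat.find h) p).2 n + 1 = ones n p.1 n := by
  have hj := (Nat.find_spec h).1
  have h1 := ones_splice_add (σ := p.1) (τ := p.2) hj
  have h2 := ones_splice_add (σ := p.2) (τ := p.1) hj
  have := ones_fst_find h
  simp only [swapTails]
  omega

def reflectEquiv (a b : ℕ) (hab : a ≤ b) :
    {p : (Fin n → Bool) × (Fin n → Bool) //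
        ones n p.1 n = a + 1 ∧ ones n p.2 n = b ∧ ¬ Dominates n p.2 p.1} ≃
      {p : (Fin n → Bool) × (Fin n → Bool) // ones n p.1 n = b + 1 ∧ ones n p.2 n = a} where
  toFun x :=
    have h := not_dominates_iff_exists_exceedsAt.1 x.2.2.2
    ⟨swapTails (Nat.find h) x.1, by have := ones_swapTails_find h; omega⟩
  invFun y :=
    have h : ∃ j, ExceedsAt y.1 j := ⟨n, le_rfl, by omega⟩
    ⟨swapTails (Nat.find h) y.1, by
      have := ones_swapTails_find h
      exact ⟨by omega, by omega,
        not_dominates_iff_exists_exceedsAt.2 (exists_exceedsAt_swapTails_find h)⟩⟩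
  left_inv x := Subtype.ext (swapTails_find_swapTails_find _ _)
  right_inv y := Subtype.ext (swapTails_find_swapTails_find _ _)

end Reflection

section Counting

lemma Nat.card_subtype_and_add_card_subtype_and_not {α : Type*} [Finite α] (P Q : α → Prop) :
    Nat.card {x // P x ∧ Q x} + Nat.card {x // P x ∧ ¬ Q x} = Nat.card {x // P x} := by
  classical
  have := Fintype.ofFinite α
  simp only [Nat.card_eq_fintype_card, Fintype.card_subtype]
  rw [← filter_filter, ← filter_filter, card_filter_add_card_filter_not]

lemma Nat.card_subtype_prod {α β : Type*} (P : α → Prop) (Q : β → Prop) :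
    Nat.card {p : α × β // P p.1 ∧ Q p.2} = Nat.card {a // P a} * Nat.card {b // Q b} := by
  rw [Nat.card_congr Equiv.subtypeProdEquivProd, Nat.card_prod]

lemma card_ones_eq (n m : ℕ) : Nat.card {σ : Fin n → Bool // ones n σ n = m} = n.choose m := by
  let e : (Fin n → Bool) ≃ Finset (Fin n) :=
    { toFun σ := {x | σ x = true}
      invFun s x := decide (x ∈ s)
      left_inv σ := by ext; simp
      right_inv s := by ext; simp }
  rw [Nat.card_congr (e.subtypeEquiv (q := fun s => #s = m) fun σ => by rw [ones_self]; rfl),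
    Nat.card_eq_fintype_card, Fintype.card_finset_len, Fintype.card_fin]

variable (n k : ℕ)

lemma card_dominated_add_card_not_dominated :
    Nat.card {p : (Fin n → Bool) × (Fin n → Bool) //
        ones n p.1 n = k ∧ ones n p.2 n = k ∧ Dominates n p.2 p.1} +
      Nat.card {p : (Fin n → Bool) × (Fin n → Bool) //
        ones n p.1 n = k ∧ ones n p.2 n = k ∧ ¬ Dominates n p.2 p.1} = n.choose k ^ 2 := by
  simp only [← and_assoc]
  rw [Nat.card_subtype_and_add_card_subtype_and_not,
    Nat.card_subtype_prod (fun σ => ones n σ n = k) (fun σ => ones n σ n = k), card_ones_eq, sq]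

lemma card_not_dominated_zero :
    Nat.card {p : (Fin n → Bool) × (Fin n → Bool) //
        ones n p.1 n = 0 ∧ ones n p.2 n = 0 ∧ ¬ Dominates n p.2 p.1} = 0 := by
  refine Nat.card_eq_zero.2 (.inl ⟨fun ⟨p, h1, _, hdom⟩ => hdom fun j hj => ?_⟩)
  have := ones_mono (σ := p.1) hj
  omega

lemma card_not_dominated_succ :
    Nat.card {p : (Fin n → Bool) × (Fin n → Bool) //
        ones n p.1 n = k + 1 ∧ ones n p.2 n = k + 1 ∧ ¬ Dominates n p.2 p.1} =
      n.choose (k + 2) * n.choose k := by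
  rw [Nat.card_congr (reflectEquiv k (k + 1) k.le_succ),
    Nat.card_subtype_prod (fun σ => ones n σ n = k + 1 + 1) (fun σ => ones n σ n = k),
    card_ones_eq, card_ones_eq]

end Counting

lemma succ_mul_choose_sq (n k : ℕ) :
    (n + 1) * n.choose (k + 1) ^ 2 =
      (n + 1).choose (k + 1) * (n + 1).choose (k + 2) +
        (n + 1) * (n.choose (k + 2) * n.choose k) := by
  rcases le_or_gt n k with hnk | hkn
  · simp [Nat.choose_eq_zero_of_lt, hnk, show n < k + 2 by omega]
  obtain ⟨ℓ, rfl⟩ := Nat.exists_eq_add_of_lt hkn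
  rw [Nat.choose_succ_succ' (k + ℓ + 1) k, Nat.choose_succ_succ' (k + ℓ + 1) (k + 1)]
  set a := (k + ℓ + 1).choose k
  set b := (k + ℓ + 1).choose (k + 1)
  set c := (k + ℓ + 1).choose (k + 2)
  have hab : b * (k + 1) = a * (ℓ + 1) := by
    rw [Nat.choose_succ_right_eq, show k + ℓ + 1 - k = ℓ + 1 by omega]
  have hbc : c * (k + 2) = b * ℓ := by
    rw [Nat.choose_succ_right_eq, show k + ℓ + 1 - (k + 1) = ℓ by omega]
  refine Nat.eq_of_mul_eq_mul_right ℓ.succ_pos ?_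
  zify at hab hbc ⊢
  linear_combination (b + c + (k + ℓ + 2) * c : ℤ) * hab - ((k + ℓ + 2) * b : ℤ) * hbc

theorem dominated_pairs_narayana (k ℓ : ℕ) :
    (k + ℓ + 1) *
        Nat.card {p : (Fin (k + ℓ) → Bool) × (Fin (k + ℓ) → Bool) //
          ones (k + ℓ) p.1 (k + ℓ) = k ∧ ones (k + ℓ) p.2 (k + ℓ) = k ∧
            Dominates (k + ℓ) p.2 p.1}
      = (k + ℓ + 1).choose k * (k + ℓ + 1).choose (k + 1) := by
  have hsplit := card_dominated_add_card_not_dominated (k + ℓ) k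
  rcases k with _ | k
  · rw [card_not_dominated_zero] at hsplit
    simp only [Nat.choose_zero_right, one_pow, add_zero] at hsplit
    rw [hsplit, zero_add, Nat.choose_zero_right, Nat.choose_one_right, mul_one, one_mul]
  · rw [card_not_dominated_succ] at hsplit
    have h := succ_mul_choose_sq (k + 1 + ℓ) k
    rw [← hsplit, mul_add] at h
    linarith
end

section
/- For natural numbers k, ℓ, the number of pairs (P₁,P₂) of non-intersecting upright lattice paths, with P₁ from (0,1) to (ℓ,k+1) and P₂ from (1,0) to (ℓ+1,k), equals the Narayana number N(k+ℓ+1,k+1), i.e., (k+ℓ+1) times this number equals C(k+ℓ+1,k)·C(k+ℓ+1,k+1). -/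
/-- An upright lattice path with `m` unit steps `(1,0)` or `(0,1)`, from `s` to `t`,
recorded as the sequence of its `m+1` visited points. -/
def IsPathN (m : ℕ) (s t : ℕ × ℕ) (p : Fin (m + 1) → ℕ × ℕ) : Prop :=
  p 0 = s ∧ p (Fin.last m) = t ∧
    ∀ i : Fin m, p i.succ = p i.castSucc + (1, 0) ∨ p i.succ = p i.castSucc + (0, 1)

/-- Two paths are non-intersecting if they share no point. -/
def Noninter {m : ℕ} (p q : Fin (m + 1) → ℕ × ℕ) : Prop := ∀ i j, p i ≠ q j

/-!
After `i` steps two upright paths from the antidiagonal `x + y = 1` both lie on `x + y = i + 1`,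
so they share a point iff they meet at a common time. Exchanging their tails after the last
meeting time is an involution carrying meeting pairs `(0,1) → (ℓ,k+1)`, `(1,0) → (ℓ+1,k)` to
meeting pairs `(0,1) → (ℓ+1,k)`, `(1,0) → (ℓ,k+1)`; and every pair of the second kind meets,
because the difference of the `x`-coordinates goes from negative to positive in steps of at most
one. Hence the non-intersecting pairs number `C(k+ℓ,k)² - C(k+ℓ,ℓ+1) C(k+ℓ,k+1)`, the
Lindström–Gessel–Viennot determinant, and writing all four binomials as rational multiples of
`C(k+ℓ,k)` identifies `k+ℓ+1` times this with `C(k+ℓ+1,k) C(k+ℓ+1,k+1)`.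
-/

open Finset

theorem Nat.card_subtype_eq_card_and_add_card_and_not {α : Type*} (p q : α → Prop)
    [Finite {a // p a}] :
    Nat.card {a // p a} = Nat.card {a // p a ∧ q a} + Nat.card {a // p a ∧ ¬q a} := by
  classical
  rw [← Nat.card_congr (Equiv.sumCompl fun a : {a // p a} => q a), Nat.card_sum,
    Nat.card_congr (Equiv.subtypeSubtypeEquivSubtypeInter p q),
    Nat.card_congr (Equiv.subtypeSubtypeEquivSubtypeInter p (¬q ·))]

theorem Fin.exists_eq_zero_of_succ_le_add_one {m : ℕ} (f : Fin (m + 1) → ℤ) (h0 : f 0 ≤ 0)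
    (hlast : 0 ≤ f (last m)) (hstep : ∀ i : Fin m, f i.succ ≤ f i.castSucc + 1) :
    ∃ i, f i = 0 := by
  induction m with
  | zero => exact ⟨0, le_antisymm h0 hlast⟩
  | succ m ih =>
    rcases hlast.eq_or_lt with hzero | hpos
    · exact ⟨_, hzero.symm⟩
    have hprev : 0 ≤ f (last m).castSucc :=
      Int.lt_add_one_iff.1 (hpos.trans_le (by simpa using hstep (last m)))
    obtain ⟨i, hi⟩ := ih (f ∘ castSucc) h0 hprev
      fun i => by simpa [← succ_castSucc] using hstep i.castSucc
    exact ⟨_, hi⟩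

section TailSwap

open Fin

variable {α : Type*} {m : ℕ}

def Meets (p q : Fin (m + 1) → α) : Prop := ∃ i, p i = q i

theorem Meets.symm {p q : Fin (m + 1) → α} (h : Meets p q) : Meets q p :=
  let ⟨i, hi⟩ := h; ⟨i, hi.symm⟩

open Classical in
/-- `p` up to the last time at which `p` and `q` meet, `q` afterwards. -/
noncomputable def tailSwap (p q : Fin (m + 1) → α) (i : Fin (m + 1)) : α :=
  if ∃ j, i ≤ j ∧ p j = q j then p i else q i

variable {p q : Fin (m + 1) → α} {i : Fin (m + 1)}

theorem tailSwap_of_exists (h : ∃ j, i ≤ j ∧ p j = q j) : tailSwap p q i = p i := if_pos h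

theorem tailSwap_of_not_exists (h : ¬∃ j, i ≤ j ∧ p j = q j) : tailSwap p q i = q i := if_neg h

theorem tailSwap_comm_of_exists (h : ∃ j, i ≤ j ∧ p j = q j) : tailSwap q p i = q i :=
  let ⟨j, hj, hpq⟩ := h; tailSwap_of_exists ⟨j, hj, hpq.symm⟩

theorem tailSwap_comm_of_not_exists (h : ¬∃ j, i ≤ j ∧ p j = q j) : tailSwap q p i = p i :=
  tailSwap_of_not_exists fun ⟨j, hj, hqp⟩ => h ⟨j, hj, hqp.symm⟩

theorem tailSwap_eq_tailSwap_iff : tailSwap p q i = tailSwap q p i ↔ p i = q i := by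
  by_cases h : ∃ j, i ≤ j ∧ p j = q j
  · rw [tailSwap_of_exists h, tailSwap_comm_of_exists h]
  · rw [tailSwap_of_not_exists h, tailSwap_comm_of_not_exists h]
    exact iff_of_false (fun e => h ⟨i, le_rfl, e.symm⟩) fun e => h ⟨i, le_rfl, e⟩

theorem tailSwap_tailSwap : tailSwap (tailSwap p q) (tailSwap q p) = p := by
  funext i
  have hmeet : (∃ j, i ≤ j ∧ tailSwap p q j = tailSwap q p j) ↔ ∃ j, i ≤ j ∧ p j = q j := by
    simp only [tailSwap_eq_tailSwap_iff]
  by_cases h : ∃ j, i ≤ j ∧ p j = q j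
  · rw [tailSwap_of_exists (hmeet.2 h), tailSwap_of_exists h]
  · rw [tailSwap_of_not_exists (mt hmeet.1 h), tailSwap_comm_of_not_exists h]

theorem Meets.tailSwap (h : Meets p q) : Meets (tailSwap p q) (tailSwap q p) :=
  let ⟨i, hi⟩ := h; ⟨i, tailSwap_eq_tailSwap_iff.2 hi⟩

theorem tailSwap_zero (h : Meets p q) : tailSwap p q 0 = p 0 :=
  let ⟨i, hi⟩ := h; tailSwap_of_exists ⟨i, zero_le i, hi⟩

theorem tailSwap_last : tailSwap p q (last m) = q (last m) := by
  by_cases h : ∃ j, last m ≤ j ∧ p j = q j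
  · obtain ⟨j, hj, hpq⟩ := h
    rw [tailSwap_of_exists ⟨j, hj, hpq⟩, ← last_le_iff.1 hj, hpq]
  · exact tailSwap_of_not_exists h

theorem tailSwap_chain (r : α → α → Prop) (hp : ∀ i : Fin m, r (p i.castSucc) (p i.succ))
    (hq : ∀ i : Fin m, r (q i.castSucc) (q i.succ)) (i : Fin m) :
    r (tailSwap p q i.castSucc) (tailSwap p q i.succ) := by
  by_cases hs : ∃ j, i.succ ≤ j ∧ p j = q j
  · obtain ⟨j, hj, hpq⟩ := hs
    rw [tailSwap_of_exists ⟨j, castSucc_lt_succ.le.trans hj, hpq⟩,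
      tailSwap_of_exists ⟨j, hj, hpq⟩]
    exact hp i
  · rw [tailSwap_of_not_exists hs]
    by_cases hc : ∃ j, i.castSucc ≤ j ∧ p j = q j
    · obtain ⟨j, hj, hpq⟩ := hc
      obtain rfl : i.castSucc = j :=
        hj.eq_or_lt.resolve_right fun hlt => hs ⟨j, castSucc_lt_iff_succ_le.1 hlt, hpq⟩
      rw [tailSwap_of_exists ⟨_, le_rfl, hpq⟩, hpq]
      exact hq i
    · rw [tailSwap_of_not_exists hc]
      exact hq i

end TailSwap

namespace LatticePath

variable {m : ℕ} {s t : ℕ × ℕ}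

def upSteps (p : Fin (m + 1) → ℕ × ℕ) : Finset (Fin m) :=
  {i | p i.succ = p i.castSucc + (0, 1)}

def stepOf (S : Finset (Fin m)) (i : Fin m) : ℕ × ℕ := if i ∈ S then (0, 1) else (1, 0)

def ofUpSteps (s : ℕ × ℕ) (S : Finset (Fin m)) (i : Fin (m + 1)) : ℕ × ℕ :=
  s + Fin.partialSum (stepOf S) i

theorem ofUpSteps_succ (s : ℕ × ℕ) (S : Finset (Fin m)) (i : Fin m) :
    ofUpSteps s S i.succ = ofUpSteps s S i.castSucc + stepOf S i := by
  rw [ofUpSteps, ofUpSteps, Fin.partialSum_succ, add_assoc]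

theorem sum_stepOf (S : Finset (Fin m)) : ∑ i, stepOf S i = (m - #S, #S) := by
  ext <;> simp [stepOf, Finset.sum_ite, Finset.filter_not, card_univ_sdiff]

theorem ofUpSteps_last (s : ℕ × ℕ) (S : Finset (Fin m)) :
    ofUpSteps s S (Fin.last m) = s + (m - #S, #S) := by
  rw [ofUpSteps, ← sum_stepOf]
  simp [Fin.partialSum, List.take_of_length_le, List.sum_ofFn]

theorem isPathN_ofUpSteps_iff (S : Finset (Fin m)) :
    IsPathN m s t (ofUpSteps s S) ↔ s + (m - #S, #S) = t := by
  simp only [IsPathN, ofUpSteps_last, ofUpSteps_succ, stepOf]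
  refine ⟨fun h => h.2.1, fun h => ⟨by simp [ofUpSteps], h, fun i => ?_⟩⟩
  split_ifs <;> simp

theorem upSteps_ofUpSteps (S : Finset (Fin m)) : upSteps (ofUpSteps s S) = S := by
  ext i
  by_cases hi : i ∈ S <;> simp [upSteps, ofUpSteps_succ, stepOf, hi]

theorem eq_ofUpSteps {p : Fin (m + 1) → ℕ × ℕ} (hp : IsPathN m s t p) :
    p = ofUpSteps s (upSteps p) := by
  funext i
  induction i using Fin.induction with
  | zero => simp [ofUpSteps, hp.1]
  | succ i ih =>
    rw [ofUpSteps_succ, ← ih, stepOf]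
    by_cases hi : p i.succ = p i.castSucc + (0, 1)
    · simp [upSteps, hi]
    · simpa [upSteps, hi] using (hp.2.2 i).resolve_right hi

variable (m s t) in
def upStepsEquiv :
    {p // IsPathN m s t p} ≃ {S : Finset (Fin m) // s + (m - #S, #S) = t} where
  toFun p := ⟨upSteps p.1, by rw [← isPathN_ofUpSteps_iff, ← eq_ofUpSteps p.2]; exact p.2⟩
  invFun S := ⟨ofUpSteps s S.1, (isPathN_ofUpSteps_iff S.1).2 S.2⟩
  left_inv p := Subtype.ext (eq_ofUpSteps p.2).symm
  right_inv S := Subtype.ext (upSteps_ofUpSteps S.1)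

end LatticePath

open LatticePath

instance (m : ℕ) (s t : ℕ × ℕ) : Finite {p // IsPathN m s t p} :=
  .of_equiv _ (upStepsEquiv m s t).symm

section Count

variable {m : ℕ} {s t : ℕ × ℕ}

theorem IsPathN.swap_comp_iff {p : Fin (m + 1) → ℕ × ℕ} :
    IsPathN m s.swap t.swap (Prod.swap ∘ p) ↔ IsPathN m s t p := by
  simp only [IsPathN, Function.comp_apply, Prod.swap_inj]
  refine and_congr_right' (and_congr_right' (forall_congr' fun i => ?_))
  rw [or_comm]
  simp [Prod.ext_iff, and_comm]

theorem card_isPathN_of_snd_le (hlen : s.1 + s.2 + m = t.1 + t.2) (hst : s.2 ≤ t.2) :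
    Nat.card {p // IsPathN m s t p} = m.choose (t.2 - s.2) := by
  have hcard : ∀ S : Finset (Fin m), s + (m - #S, #S) = t ↔ #S = t.2 - s.2 := fun S => by
    have := S.card_le_univ
    simp only [Fintype.card_fin] at this
    simp only [Prod.ext_iff, Prod.fst_add, Prod.snd_add]
    omega
  rw [Nat.card_congr ((upStepsEquiv m s t).trans (Equiv.subtypeEquivRight hcard)),
    Nat.card_eq_fintype_card, Fintype.card_finset_len, Fintype.card_fin]

theorem card_isPathN_of_fst_le (hlen : s.1 + s.2 + m = t.1 + t.2) (hst : s.1 ≤ t.1) :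
    Nat.card {p // IsPathN m s t p} = m.choose (t.1 - s.1) := by
  let e : {p // IsPathN m s t p} ≃ {p // IsPathN m s.swap t.swap p} :=
    (Equiv.arrowCongr (.refl _) (.prodComm ℕ ℕ)).subtypeEquiv fun _ => IsPathN.swap_comp_iff.symm
  rw [Nat.card_congr e, card_isPathN_of_snd_le (by simp; omega) hst]
  rfl

end Count

namespace IsPathN

variable {m : ℕ} {s t a₁ b₁ a₂ b₂ : ℕ × ℕ} {p q : Fin (m + 1) → ℕ × ℕ}

theorem fst_add_snd (hp : IsPathN m s t p) (i : Fin (m + 1)) :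
    (p i).1 + (p i).2 = s.1 + s.2 + i := by
  induction i using Fin.induction with
  | zero => simp [hp.1]
  | succ i ih =>
    rcases hp.2.2 i with h | h <;> simp only [h, Prod.fst_add, Prod.snd_add, Fin.val_succ] <;>
      simp only [Fin.val_castSucc] at ih <;> omega

theorem fst_castSucc_le (hp : IsPathN m s t p) (i : Fin m) :
    (p i.castSucc).1 ≤ (p i.succ).1 := by
  rcases hp.2.2 i with h | h <;> simp [h]

theorem fst_succ_le (hp : IsPathN m s t p) (i : Fin m) :
    (p i.succ).1 ≤ (p i.castSucc).1 + 1 := by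
  rcases hp.2.2 i with h | h <;> simp [h]

theorem tailSwap (hp : IsPathN m a₁ b₁ p) (hq : IsPathN m a₂ b₂ q) (h : Meets p q) :
    IsPathN m a₁ b₂ (tailSwap p q) :=
  ⟨(tailSwap_zero h).trans hp.1, tailSwap_last.trans hq.2.1,
    tailSwap_chain (fun x y => y = x + (1, 0) ∨ y = x + (0, 1)) hp.2.2 hq.2.2⟩

theorem noninter_iff_not_meets (hp : IsPathN m a₁ b₁ p) (hq : IsPathN m a₂ b₂ q)
    (hlevel : a₁.1 + a₁.2 = a₂.1 + a₂.2) : Noninter p q ↔ ¬Meets p q := by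
  refine ⟨fun h ⟨i, hi⟩ => h i i hi, fun h i j hij => h ⟨i, ?_⟩⟩
  have hij' : i = j := by
    have := hp.fst_add_snd i
    have := hq.fst_add_snd j
    rw [hij] at *
    exact Fin.ext (by omega)
  rw [hij, hij']

theorem meets (hp : IsPathN m a₁ b₁ p) (hq : IsPathN m a₂ b₂ q)
    (hlevel : a₁.1 + a₁.2 = a₂.1 + a₂.2) (hstart : a₁.1 ≤ a₂.1) (hend : b₂.1 ≤ b₁.1) :
    Meets p q := by
  obtain ⟨i, hi⟩ := Fin.exists_eq_zero_of_succ_le_add_one (fun i => (p i).1 - (q i).1)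
    (by simp [hp.1, hq.1, hstart]) (by simp [hp.2.1, hq.2.1, hend])
    fun i => by have := hp.fst_succ_le i; have := hq.fst_castSucc_le i; omega
  have := hp.fst_add_snd i
  have := hq.fst_add_snd i
  exact ⟨i, Prod.ext (by omega) (by omega)⟩

end IsPathN

section LindstromGesselViennot

variable {m : ℕ} {a₁ b₁ a₂ b₂ : ℕ × ℕ}

noncomputable def tailSwapPair
    (pr : {pr : (Fin (m + 1) → ℕ × ℕ) × (Fin (m + 1) → ℕ × ℕ) //
      (IsPathN m a₁ b₁ pr.1 ∧ IsPathN m a₂ b₂ pr.2) ∧ Meets pr.1 pr.2}) :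
    {pr : (Fin (m + 1) → ℕ × ℕ) × (Fin (m + 1) → ℕ × ℕ) //
      (IsPathN m a₁ b₂ pr.1 ∧ IsPathN m a₂ b₁ pr.2) ∧ Meets pr.1 pr.2} :=
  ⟨(tailSwap pr.1.1 pr.1.2, tailSwap pr.1.2 pr.1.1),
    ⟨pr.2.1.1.tailSwap pr.2.1.2 pr.2.2, pr.2.1.2.tailSwap pr.2.1.1 pr.2.2.symm⟩, pr.2.2.tailSwap⟩

variable (m a₁ b₁ a₂ b₂) in
noncomputable def tailSwapEquiv :
    {pr : (Fin (m + 1) → ℕ × ℕ) × (Fin (m + 1) → ℕ × ℕ) //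
      (IsPathN m a₁ b₁ pr.1 ∧ IsPathN m a₂ b₂ pr.2) ∧ Meets pr.1 pr.2} ≃
    {pr : (Fin (m + 1) → ℕ × ℕ) × (Fin (m + 1) → ℕ × ℕ) //
      (IsPathN m a₁ b₂ pr.1 ∧ IsPathN m a₂ b₁ pr.2) ∧ Meets pr.1 pr.2} where
  toFun := tailSwapPair
  invFun := tailSwapPair
  left_inv _ := Subtype.ext (Prod.ext tailSwap_tailSwap tailSwap_tailSwap)
  right_inv _ := Subtype.ext (Prod.ext tailSwap_tailSwap tailSwap_tailSwap)

instance : Finite {pr : (Fin (m + 1) → ℕ × ℕ) × (Fin (m + 1) → ℕ × ℕ) //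
    IsPathN m a₁ b₁ pr.1 ∧ IsPathN m a₂ b₂ pr.2} :=
  .of_equiv _ Equiv.subtypeProdEquivProd.symm

theorem card_isPathN_pair :
    Nat.card {pr : (Fin (m + 1) → ℕ × ℕ) × (Fin (m + 1) → ℕ × ℕ) //
      IsPathN m a₁ b₁ pr.1 ∧ IsPathN m a₂ b₂ pr.2} =
    Nat.card {p // IsPathN m a₁ b₁ p} * Nat.card {q // IsPathN m a₂ b₂ q} := by
  rw [Nat.card_congr Equiv.subtypeProdEquivProd, Nat.card_prod]

theorem card_noninter_add_card_mul_card (hlevel : a₁.1 + a₁.2 = a₂.1 + a₂.2)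
    (hstart : a₁.1 ≤ a₂.1) (hend : b₁.1 ≤ b₂.1) :
    Nat.card {pr : (Fin (m + 1) → ℕ × ℕ) × (Fin (m + 1) → ℕ × ℕ) //
        IsPathN m a₁ b₁ pr.1 ∧ IsPathN m a₂ b₂ pr.2 ∧ Noninter pr.1 pr.2} +
      Nat.card {p // IsPathN m a₁ b₂ p} * Nat.card {q // IsPathN m a₂ b₁ q} =
    Nat.card {p // IsPathN m a₁ b₁ p} * Nat.card {q // IsPathN m a₂ b₂ q} := by
  have hnoninter := Nat.card_congr <| Equiv.subtypeEquivRight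
    fun pr : (Fin (m + 1) → ℕ × ℕ) × (Fin (m + 1) → ℕ × ℕ) =>
      show IsPathN m a₁ b₁ pr.1 ∧ IsPathN m a₂ b₂ pr.2 ∧ Noninter pr.1 pr.2 ↔
          (IsPathN m a₁ b₁ pr.1 ∧ IsPathN m a₂ b₂ pr.2) ∧ ¬Meets pr.1 pr.2 from
        ⟨fun ⟨hp, hq, h⟩ => ⟨⟨hp, hq⟩, (hp.noninter_iff_not_meets hq hlevel).1 h⟩,
          fun ⟨⟨hp, hq⟩, h⟩ => ⟨hp, hq, (hp.noninter_iff_not_meets hq hlevel).2 h⟩⟩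
  have hswapped := Nat.card_congr <| Equiv.subtypeEquivRight
    fun pr : (Fin (m + 1) → ℕ × ℕ) × (Fin (m + 1) → ℕ × ℕ) =>
      show (IsPathN m a₁ b₂ pr.1 ∧ IsPathN m a₂ b₁ pr.2) ∧ Meets pr.1 pr.2 ↔
          IsPathN m a₁ b₂ pr.1 ∧ IsPathN m a₂ b₁ pr.2 from
        and_iff_left_of_imp fun ⟨hp, hq⟩ => hp.meets hq hlevel hstart hend
  rw [← card_isPathN_pair, ← card_isPathN_pair, ← hswapped,
    ← Nat.card_congr (tailSwapEquiv m a₁ b₁ a₂ b₂), hnoninter, add_comm]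
  exact (Nat.card_subtype_eq_card_and_add_card_and_not _ _).symm

end LindstromGesselViennot

theorem narayana_identity (k ℓ : ℕ) :
    (k + ℓ + 1) * ((k + ℓ).choose k * (k + ℓ).choose k)
      = (k + ℓ + 1).choose k * (k + ℓ + 1).choose (k + 1)
        + (k + ℓ + 1) * ((k + ℓ).choose (ℓ + 1) * (k + ℓ).choose (k + 1)) := by
  have hsymm : (k + ℓ).choose ℓ = (k + ℓ).choose k := Nat.choose_symm_add.symm
  have e₁ : ((k + ℓ + 1).choose (k + 1) : ℚ) = (k + ℓ + 1) * (k + ℓ).choose k / (k + 1) := by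
    rw [eq_div_iff (by positivity)]
    exact_mod_cast (Nat.add_one_mul_choose_eq (k + ℓ) k).symm
  have e₂ : ((k + ℓ + 1).choose k : ℚ) = (k + ℓ + 1) * (k + ℓ).choose k / (ℓ + 1) := by
    rw [eq_div_iff (by positivity), Nat.choose_symm_of_eq_add (by ring : k + ℓ + 1 = k + (ℓ + 1)),
      ← hsymm]
    exact_mod_cast (Nat.add_one_mul_choose_eq (k + ℓ) ℓ).symm
  have e₃ : ((k + ℓ).choose (ℓ + 1) : ℚ) = (k + ℓ).choose k * k / (ℓ + 1) := by
    rw [eq_div_iff (by positivity), ← hsymm]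
    exact_mod_cast (Nat.choose_succ_right_eq (k + ℓ) ℓ).trans (by rw [Nat.add_sub_cancel])
  have e₄ : ((k + ℓ).choose (k + 1) : ℚ) = (k + ℓ).choose k * ℓ / (k + 1) := by
    rw [eq_div_iff (by positivity)]
    exact_mod_cast (Nat.choose_succ_right_eq (k + ℓ) k).trans (by rw [Nat.add_sub_cancel_left])
  qify
  rw [e₁, e₂, e₃, e₄]
  field_simp
  ring

theorem noninter_pairs_narayana (k ℓ : ℕ) :
    (k + ℓ + 1) *
        Nat.card {pr : (Fin (k + ℓ + 1) → ℕ × ℕ) × (Fin (k + ℓ + 1) → ℕ × ℕ) //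
          IsPathN (k + ℓ) (0, 1) (ℓ, k + 1) pr.1 ∧
          IsPathN (k + ℓ) (1, 0) (ℓ + 1, k) pr.2 ∧ Noninter pr.1 pr.2}
      = (k + ℓ + 1).choose k * (k + ℓ + 1).choose (k + 1) := by
  have hlgv := card_noninter_add_card_mul_card (m := k + ℓ) (a₁ := (0, 1)) (b₁ := (ℓ, k + 1))
    (a₂ := (1, 0)) (b₂ := (ℓ + 1, k)) rfl zero_le_one (Nat.le_succ ℓ)
  -- `(0,1) → (ℓ+1,k)` is counted by its right steps: its `k - 1` up steps would truncate at `k = 0`.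
  rw [card_isPathN_of_snd_le (s := (0, 1)) (t := (ℓ, k + 1)) (by simp; ring) (by simp),
    card_isPathN_of_fst_le (s := (0, 1)) (t := (ℓ + 1, k)) (by simp; ring) (by simp),
    card_isPathN_of_snd_le (s := (1, 0)) (t := (ℓ, k + 1)) (by simp; ring) (by simp),
    card_isPathN_of_snd_le (s := (1, 0)) (t := (ℓ + 1, k)) (by simp; ring) (by simp)] at hlgv
  simp only [add_tsub_cancel_right, tsub_zero] at hlgv
  apply Nat.add_right_cancel (m := (k + ℓ + 1) * ((k + ℓ).choose (ℓ + 1) * (k + ℓ).choose (k + 1)))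
  rw [← mul_add, hlgv, narayana_identity]
end
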